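/- arXiv:2510.21287 — 4 statements merged into one kernel-verified Lean document; each statement's English description precedes it below -/
import Mathlib

section
/- Abstract face-preserving rounding theorem (existential version): Let Q ⊆ ℝ^N be a convex set, Z ⊆ Q, and R ⊆ ℝ^N a convex set containing the origin. Let c ∈ ℝ^N, x ∈ Q, and suppose y* minimizes c · y over Q ∩ (x − R). Suppose z ∈ Z satisfies z − y* ∈ R and there exists ε > 0 with y* + ε·(y* − z) ∈ Q. Then c · z ≤ c · x and z ∈ x + (R − R). -/
open Pointwise

theorem stmt_9 {N : Type*} [Fintype N]
    (Q Z R : Set (N → ℝ)) (hQ : Convex ℝ Q) (hZQ : Z ⊆ Q)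
    (hR : Convex ℝ R) (h0 : (0 : N → ℝ) ∈ R)
    (c x : N → ℝ) (hx : x ∈ Q)
    (ystar : N → ℝ) (hystar : ystar ∈ Q ∩ ({x} - R))
    (hmin : ∀ y ∈ Q ∩ ({x} - R), ∑ i, c i * ystar i ≤ ∑ i, c i * y i)
    (z : N → ℝ) (hzZ : z ∈ Z) (hzR : z - ystar ∈ R)
    (hface : ∃ ε > (0 : ℝ), ystar + ε • (ystar - z) ∈ Q) :
    ∑ i, c i * z i ≤ ∑ i, c i * x i ∧ z ∈ {x} + (R - R) := by
  obtain ⟨ε, hε, hw⟩ := hface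
  obtain ⟨hyQ, hyxR⟩ := hystar
  -- extract r = x - ystar ∈ R
  obtain ⟨a, ha, r, hrR, har⟩ := hyxR
  rw [Set.mem_singleton_iff] at ha
  rw [ha] at har
  have hr' : x - ystar = r := by
    rw [← har]; funext i; simp only [Pi.sub_apply]; ring
  -- set t = ε / (1 + ε)
  set t : ℝ := ε / (1 + ε) with ht
  have h1ε : (0:ℝ) < 1 + ε := by linarith
  have ht0 : 0 < t := div_pos hε h1ε
  have ht1 : t < 1 := by rw [ht, div_lt_one h1ε]; linarith
  -- w' = ystar + t • (x - z)
  set w' : N → ℝ := ystar + t • (x - z) with hw'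
  have hw'Q : w' ∈ Q := by
    have hcomb := hQ hx hw (le_of_lt ht0) (by linarith : (0:ℝ) ≤ 1 - t)
      (by ring : t + (1 - t) = 1)
    convert hcomb using 1
    funext i
    simp only [hw', Pi.add_apply, Pi.smul_apply, Pi.sub_apply, smul_eq_mul]
    rw [ht]
    field_simp
    ring
  have hw'R : w' ∈ Q ∩ ({x} - R) := by
    refine ⟨hw'Q, ?_⟩
    have hmem : (1 - t) • r + t • (z - ystar) ∈ R :=
      hR hrR hzR (by linarith) (le_of_lt ht0) (by ring)
    exact ⟨x, rfl, (1 - t) • r + t • (z - ystar), hmem, by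
      funext i
      simp only [Pi.sub_apply, Pi.add_apply, Pi.smul_apply, smul_eq_mul, hw']
      have := congrFun hr' i
      simp only [Pi.sub_apply] at this
      nlinarith [this]⟩
  have hle := hmin w' hw'R
  have hsum : ∑ i, c i * w' i
      = ∑ i, c i * ystar i + t * (∑ i, c i * x i - ∑ i, c i * z i) := by
    rw [← Finset.sum_sub_distrib, Finset.mul_sum, ← Finset.sum_add_distrib]
    refine Finset.sum_congr rfl fun i _ => ?_
    simp only [hw', Pi.add_apply, Pi.smul_apply, Pi.sub_apply, smul_eq_mul]
    ring
  have hcz : ∑ i, c i * z i ≤ ∑ i, c i * x i := by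
    rw [hsum] at hle
    nlinarith
  refine ⟨hcz, ?_⟩
  exact ⟨x, rfl, (z - ystar) - r, ⟨z - ystar, hzR, r, hrR, rfl⟩, by
    funext i
    have := congrFun hr' i
    simp only [Pi.sub_apply] at this
    simp only [Pi.add_apply, Pi.sub_apply]
    linarith⟩
end

section
/- Abstract face-preserving rounding tradeoff theorem (existential version): Let Q ⊆ ℝ^N_{≥0} be a convex set contained in the nonnegative orthant, let R ⊆ ℝ^N be a convex set containing the origin, let c ∈ ℝ^N_{≥0}, and let 0 < λ ≤ 1. Let x ∈ Q, and suppose y* minimizes c · y over Q ∩ (x − λ·R). Suppose z satisfies z − y* ∈ R and there exists ε > 0 with y* + ε·(y* − z) ∈ Q. Then c · z ≤ (1/λ)·(c · x) and z ∈ x + (R − λ·R). -/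
/-!
Write `w = y* + ε • (y* - z)` for the point of `Q` beyond `y*`. The point
`y' = (ε • x + λ • w) / (ε + λ)` lies in `Q` as a convex combination of `x` and `w`, and
`x - y' = λ • ((λ • r + ε • (z - y*)) / (ε + λ))` with `y* = x - λ • r`, so `y'` is also in
`x - λ • R`. Minimality of `y*` against `y'` gives `λ (c · z) ≤ c · x - (1 - λ) (c · y*)`,
and `c · y* ≥ 0` because `y* ∈ Q` lies in the nonnegative orthant.
-/

open Pointwise

section
variable {E : Type*} [AddCommGroup E] [Module ℝ E] {R : Set E} {x y z : E} {l : ℝ}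

theorem exists_eq_sub_smul_of_mem_singleton_sub_smul (hy : y ∈ {x} - l • R) :
    ∃ r ∈ R, y = x - l • r := by
  obtain ⟨_, rfl, _, ⟨r, hr, rfl⟩, rfl⟩ := hy
  exact ⟨r, hr, rfl⟩

theorem mem_singleton_add_sub_smul (hy : y ∈ {x} - l • R) (hzy : z - y ∈ R) :
    z ∈ {x} + (R - l • R) := by
  obtain ⟨r, hr, rfl⟩ := exists_eq_sub_smul_of_mem_singleton_sub_smul hy
  refine ⟨x, rfl, _, Set.sub_mem_sub hzy (Set.smul_mem_smul_set hr), ?_⟩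
  show x + (z - (x - l • r) - l • r) = z
  abel

theorem combo_mem_singleton_sub_smul (hR : Convex ℝ R) (hy : y ∈ {x} - l • R) (hzy : z - y ∈ R)
    {ε : ℝ} (hl : 0 < l) (hε : 0 < ε) :
    (ε / (ε + l)) • x + (l / (ε + l)) • (y + ε • (y - z)) ∈ {x} - l • R := by
  obtain ⟨r, hr, rfl⟩ := exists_eq_sub_smul_of_mem_singleton_sub_smul hy
  have hεl : ε + l ≠ 0 := by positivity
  have hmem : (l / (ε + l)) • r + (ε / (ε + l)) • (z - (x - l • r)) ∈ R :=
    hR hr hzy (by positivity) (by positivity) (by field_simp; ring)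
  refine ⟨x, rfl, _, Set.smul_mem_smul_set hmem, ?_⟩
  match_scalars <;> field_simp <;> ring

theorem mul_apply_le_of_isMinOn_of_add_smul_sub_mem {Q : Set E} (f : E →ₗ[ℝ] ℝ)
    (hQ : Convex ℝ Q) (hR : Convex ℝ R) (hl : 0 < l) (hx : x ∈ Q) (hy : y ∈ {x} - l • R)
    (hmin : IsMinOn f (Q ∩ ({x} - l • R)) y) (hzy : z - y ∈ R)
    {ε : ℝ} (hε : 0 < ε) (hface : y + ε • (y - z) ∈ Q) :
    l * f z ≤ f x - (1 - l) * f y := by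
  have hεl : 0 < ε + l := by positivity
  have hQ' : (ε / (ε + l)) • x + (l / (ε + l)) • (y + ε • (y - z)) ∈ Q :=
    hQ hx hface (by positivity) (by positivity) (by field_simp)
  have hle := isMinOn_iff.1 hmin _ ⟨hQ', combo_mem_singleton_sub_smul hR hy hzy hl hε⟩
  simp only [map_add, map_smul, map_sub, smul_eq_mul] at hle
  rw [div_mul_eq_mul_div, div_mul_eq_mul_div, ← add_div, le_div_iff₀ hεl] at hle
  have hscaled : ε * (l * f z) ≤ ε * (f x - (1 - l) * f y) := by linarith
  exact le_of_mul_le_mul_left hscaled hε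

end

theorem stmt_10_general {N : Type*} [Fintype N]
    (Q R : Set (N → ℝ)) (hQ : Convex ℝ Q)
    (hQnonneg : ∀ q ∈ Q, ∀ i, 0 ≤ q i)
    (hR : Convex ℝ R)
    (c : N → ℝ) (hc : ∀ i, 0 ≤ c i)
    (l : ℝ) (hl0 : 0 < l) (hl1 : l ≤ 1)
    (x : N → ℝ) (hx : x ∈ Q)
    (ystar : N → ℝ) (hystar : ystar ∈ Q ∩ ({x} - l • R))
    (hmin : ∀ y ∈ Q ∩ ({x} - l • R), ∑ i, c i * ystar i ≤ ∑ i, c i * y i)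
    (z : N → ℝ) (hzR : z - ystar ∈ R)
    (hface : ∃ ε > (0 : ℝ), ystar + ε • (ystar - z) ∈ Q) :
    ∑ i, c i * z i ≤ (1 / l) * ∑ i, c i * x i ∧ z ∈ {x} + (R - l • R) := by
  obtain ⟨hyQ, hy⟩ := hystar
  obtain ⟨ε, hε, hfaceQ⟩ := hface
  have htradeoff : l * ∑ i, c i * z i ≤ ∑ i, c i * x i - (1 - l) * ∑ i, c i * ystar i :=
    mul_apply_le_of_isMinOn_of_add_smul_sub_mem (dotProductBilin ℝ ℝ c) hQ hR hl0 hx hy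
      (isMinOn_iff.2 hmin) hzR hε hfaceQ
  have hy_nonneg : 0 ≤ ∑ i, c i * ystar i :=
    Finset.sum_nonneg fun i _ => mul_nonneg (hc i) (hQnonneg ystar hyQ i)
  refine ⟨?_, mem_singleton_add_sub_smul hy hzR⟩
  rw [one_div_mul_eq_div, le_div_iff₀' hl0]
  linarith [mul_nonneg (sub_nonneg.2 hl1) hy_nonneg]

theorem stmt_10 {N : Type*} [Fintype N]
    (Q R : Set (N → ℝ)) (hQ : Convex ℝ Q)
    (hQnonneg : ∀ q ∈ Q, ∀ i, 0 ≤ q i)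
    (hR : Convex ℝ R) (h0 : (0 : N → ℝ) ∈ R)
    (c : N → ℝ) (hc : ∀ i, 0 ≤ c i)
    (l : ℝ) (hl0 : 0 < l) (hl1 : l ≤ 1)
    (x : N → ℝ) (hx : x ∈ Q)
    (ystar : N → ℝ) (hystar : ystar ∈ Q ∩ ({x} - l • R))
    (hmin : ∀ y ∈ Q ∩ ({x} - l • R), ∑ i, c i * ystar i ≤ ∑ i, c i * y i)
    (z : N → ℝ) (hzR : z - ystar ∈ R)
    (hface : ∃ ε > (0 : ℝ), ystar + ε • (ystar - z) ∈ Q) :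
    ∑ i, c i * z i ≤ (1 / l) * ∑ i, c i * x i ∧ z ∈ {x} + (R - l • R) :=
  stmt_10_general Q R hQ hQnonneg hR c hc l hl0 hl1 x hx ystar hystar hmin z hzR hface
end

section
/- Let Q ⊆ ℝ^N be a nonempty compact convex set, Z ⊆ Q, and R ⊆ ℝ^N a compact convex set containing the origin. Suppose that for every y ∈ Q there exists z ∈ Z with z − y ∈ R and such that there exists ε > 0 with y + ε·(y − z) ∈ Q. Then for every c ∈ ℝ^N and every x ∈ Q, there exists z ∈ Z with c · z ≤ c · x and z ∈ x + (R − R). -/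
open Pointwise

theorem stmt_15 {N : Type*} [Fintype N]
    (Q Z R : Set (N → ℝ)) (hQne : Q.Nonempty) (hQc : IsCompact Q)
    (hQ : Convex ℝ Q) (hZQ : Z ⊆ Q)
    (hRc : IsCompact R) (hR : Convex ℝ R) (h0 : (0 : N → ℝ) ∈ R)
    (hFPRA : ∀ y ∈ Q, ∃ z ∈ Z, z - y ∈ R ∧ ∃ ε > (0 : ℝ), y + ε • (y - z) ∈ Q) :
    ∀ (c : N → ℝ), ∀ x ∈ Q, ∃ z ∈ Z,
      (∑ i, c i * z i ≤ ∑ i, c i * x i) ∧ z ∈ {x} + (R - R) := by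
  intro c x hx
  set f : (N → ℝ) → ℝ := fun y => ∑ i, c i * y i with hf
  have hflin : ∀ (a b : ℝ) (u w : N → ℝ), f (a • u + b • w) = a * f u + b * f w := by
    intro a b u w
    simp only [hf, Pi.add_apply, Pi.smul_apply, smul_eq_mul]
    rw [Finset.mul_sum, Finset.mul_sum, ← Finset.sum_add_distrib]
    exact Finset.sum_congr rfl fun i _ => by ring
  have hfcont : Continuous f := by
    apply continuous_finset_sum
    intro i _
    exact continuous_const.mul (continuous_apply i)
  set K : Set (N → ℝ) := Q ∩ ((fun y => x - y) ⁻¹' R) with hK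
  have hxK : x ∈ K := ⟨hx, by simp [h0]⟩
  have hKcomp : IsCompact K :=
    hQc.inter_right ((hRc.isClosed).preimage (continuous_const.sub continuous_id))
  obtain ⟨y, hyK, hymin⟩ := hKcomp.exists_isMinOn ⟨x, hxK⟩ hfcont.continuousOn
  have hyQ : y ∈ Q := hyK.1
  have hxyR : x - y ∈ R := hyK.2
  obtain ⟨z, hzZ, hzR, ε, hεpos, hyε⟩ := hFPRA y hyQ
  have hAC : f y ≤ f x := hymin hxK
  -- key inequality for small s
  have key : ∀ s : ℝ, 0 < s → s ≤ ε → s ≤ 1 → (1 - s) * (f z - f y) ≤ f x - f y := by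
    intro s hs hsε hs1
    set u : N → ℝ := y + s • (y - z) with hu
    have huQ : u ∈ Q := by
      have heq : u = (1 - s / ε) • y + (s / ε) • (y + ε • (y - z)) := by
        rw [hu, smul_add, smul_smul, div_mul_cancel₀ _ (ne_of_gt hεpos)]
        module
      rw [heq]
      exact hQ hyQ hyε (by
        have : s / ε ≤ 1 := (div_le_one hεpos).mpr hsε
        linarith) (by positivity) (by ring)
    set v : N → ℝ := (1 - s) • u + s • x with hv
    have hvQ : v ∈ Q := hQ huQ hx (by linarith) hs.le (by ring)
    have hp : (1 - s) • (z - y) ∈ R := by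
      have := hR hzR h0 (by linarith : (0:ℝ) ≤ 1 - s) hs.le (by ring)
      simpa using this
    have hxv : x - v = (1 - s) • (x - y) + s • ((1 - s) • (z - y)) := by
      rw [hv, hu]; module
    have hxvR : x - v ∈ R := by
      rw [hxv]
      exact hR hxyR hp (by linarith) hs.le (by ring)
    have hvK : v ∈ K := ⟨hvQ, hxvR⟩
    have hmin := hymin hvK
    have hfv : f v = (1 - s) * f u + s * f x := by rw [hv, hflin]
    have hfu : f u = f y + s * (f y - f z) := by
      have h1 : u = (1 : ℝ) • y + s • (y - z) := by rw [hu]; module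
      have h2 : y - z = (1 : ℝ) • y + (-1 : ℝ) • z := by module
      rw [h1, hflin, h2, hflin]
      ring
    have : f y ≤ (1 - s) * (f y + s * (f y - f z)) + s * f x := by
      rw [← hfu, ← hfv]; exact hmin
    nlinarith [this]
  have hzx : f z ≤ f x := by
    rcases le_or_gt (f z) (f y) with h | h
    · linarith
    · by_contra hBC
      push_neg at hBC
      set s : ℝ := min (min ε 1) ((f z - f x) / (2 * (f z - f y))) with hs
      have hd : 0 < f z - f y := by linarith
      have hspos : 0 < s := by
        apply lt_min (lt_min hεpos one_pos)
        apply div_pos (by linarith) (by linarith)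
      have h1 := key s hspos (le_trans (min_le_left _ _) (min_le_left _ _))
        (le_trans (min_le_left _ _) (min_le_right _ _))
      have h2 : s * (2 * (f z - f y)) ≤ f z - f x :=
        (le_div_iff₀ (by linarith)).mp (min_le_right _ _)
      nlinarith [h1, h2]
  refine ⟨z, hzZ, hzx, ?_⟩
  have hm := Set.add_mem_add (Set.mem_singleton x) (Set.sub_mem_sub hzR hxyR)
  have heq : x + ((z - y) - (x - y)) = z := by module
  rwa [heq] at hm
end

section
/- Rerouting parallel commodities: Let P₁ ⊂ ℝ^E and suppose commodities i and j are parallel in a cycle, meaning their four paths satisfy P_i¹ ⊆ P_j² and P_j¹ ⊆ P_i², where P_ℓ¹, P_ℓ² ⊆ E partition the cycle edge set E for ℓ ∈ {i, j}. Given splitting values λ_i, λ_j ∈ [0,1] and demands d_i, d_j ≥ 0, define μ = min{(1−λ_i)·d_i, (1−λ_j)·d_j}, and new load vector y obtained from x(e) = λ_i d_i·[e ∈ P_i¹] + (1−λ_i) d_i·[e ∈ P_i²] + λ_j d_j·[e ∈ P_j¹] + (1−λ_j) d_j·[e ∈ P_j²] by shifting μ units of commodity i's flow from P_i² to P_i¹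 and μ units of commodity j's flow from P_j² to P_j¹. Then y(e) ≤ x(e) for all e ∈ E, and at least one of the two commodities is routed entirely on a single path in y. -/
theorem stmt_17 {E : Type*} (Pi1 Pi2 Pj1 Pj2 : Set E)
    (hiPart : Pi1 ∪ Pi2 = Set.univ ∧ Pi1 ∩ Pi2 = ∅)
    (hjPart : Pj1 ∪ Pj2 = Set.univ ∧ Pj1 ∩ Pj2 = ∅)
    (hij : Pi1 ⊆ Pj2) (hji : Pj1 ⊆ Pi2)
    (li lj di dj : ℝ) (hli : li ∈ Set.Icc (0 : ℝ) 1) (hlj : lj ∈ Set.Icc (0 : ℝ) 1)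
    (hdi : 0 ≤ di) (hdj : 0 ≤ dj)
    (μ : ℝ) (hμ : μ = min ((1 - li) * di) ((1 - lj) * dj))
    (x y : E → ℝ)
    (hx : ∀ e, x e =
      Pi1.indicator (fun _ => li * di) e + Pi2.indicator (fun _ => (1 - li) * di) e +
      Pj1.indicator (fun _ => lj * dj) e + Pj2.indicator (fun _ => (1 - lj) * dj) e)
    (hy : ∀ e, y e =
      Pi1.indicator (fun _ => li * di + μ) e +
      Pi2.indicator (fun _ => (1 - li) * di - μ) e +
      Pj1.indicator (fun _ => lj * dj + μ) e +
      Pj2.indicator (fun _ => (1 - lj) * dj - μ) e) :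
    (∀ e, y e ≤ x e) ∧ ((1 - li) * di - μ = 0 ∨ (1 - lj) * dj - μ = 0) := by
  have hμi : μ ≤ (1 - li) * di := hμ ▸ min_le_left _ _
  have hμj : μ ≤ (1 - lj) * dj := hμ ▸ min_le_right _ _
  have hμ0 : 0 ≤ μ := by
    rw [hμ]
    exact le_min (mul_nonneg (by linarith [hli.2]) hdi)
      (mul_nonneg (by linarith [hlj.2]) hdj)
  constructor
  · intro e
    rw [hx, hy]
    by_cases h1 : e ∈ Pi1
    · have h2 : e ∉ Pi2 := fun h => Set.eq_empty_iff_forall_notMem.mp hiPart.2 e ⟨h1, h⟩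
      have h4 : e ∈ Pj2 := hij h1
      have h3 : e ∉ Pj1 := fun h => Set.eq_empty_iff_forall_notMem.mp hjPart.2 e ⟨h, h4⟩
      simp [h1, h2, h3, h4]
    · have h2 : e ∈ Pi2 := by
        have := hiPart.1 ▸ Set.mem_univ e
        rcases this with h | h
        · exact absurd h h1
        · exact h
      by_cases h3 : e ∈ Pj1
      · have h4 : e ∉ Pj2 := fun h => Set.eq_empty_iff_forall_notMem.mp hjPart.2 e ⟨h3, h⟩
        simp [h1, h2, h3, h4]
      · have h4 : e ∈ Pj2 := by
          have := hjPart.1 ▸ Set.mem_univ e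
          rcases this with h | h
          · exact absurd h h3
          · exact h
        simp only [Set.indicator_of_notMem h1, Set.indicator_of_notMem h3, Set.indicator_of_mem h2, Set.indicator_of_mem h4]
        linarith
  · rcases le_total ((1 - li) * di) ((1 - lj) * dj) with h | h
    · left; rw [hμ, min_eq_left h]; ring
    · right; rw [hμ, min_eq_right h]; ring
end
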